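/- Generation lemma for abstractions: for any Lineal term t, Scalar type T and context Γ, if Γ ⊢ λx.t : T then there exist a unit type U and a Scalar type R such that Γ, x:U ⊢ t : R and U→R ⪯ T. Moreover (corollary), if Γ ⊢ λx.t : U→T for a unit type U and Scalar type T, then Γ, x:U ⊢ t : T. -/

import Mathlib

set_option autoImplicit false

namespace Lineal

/-! ### Lineal terms -/

inductive Trm (S : Type) : Type where
  | var : ℕ → Trm S
  | lam : Trm S → Trm S
  | app : Trm S → Trm S → Trm S
  | zero : Trm S
  | smul : S → Trm S → Trm S
  | add : Trm S → Trm S → Trm S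

namespace Trm

variable {S : Type}

/-- Basis terms: variables and abstractions. -/
def IsBasis : Trm S → Prop
  | var _ => True
  | lam _ => True
  | _ => False

/-- de Bruijn shift by `d` of variables `≥ c`. -/
def shift (d : ℕ) : ℕ → Trm S → Trm S
  | c, var k => if k < c then var k else var (k + d)
  | c, lam t => lam (shift d (c + 1) t)
  | c, app t r => app (shift d c t) (shift d c r)
  | _, zero => zero
  | c, smul a t => smul a (shift d c t)
  | c, add t r => add (shift d c t) (shift d c r)

/-- Capture-avoiding substitution `t[s / j]` (de Bruijn). -/
def subst : Trm S → Trm S → ℕ → Trm S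
  | var k, s, j => if k = j then s else if j < k then var (k - 1) else var k
  | lam t, s, j => lam (subst t (shift 1 0 s) (j + 1))
  | app t r, s, j => app (subst t s j) (subst r s j)
  | zero, _, _ => zero
  | smul a t, s, j => smul a (subst t s j)
  | add t r, s, j => add (subst t s j) (subst r s j)

/-- All free variables are `< n`. -/
def ClosedUnder : ℕ → Trm S → Prop
  | n, var k => k < n
  | n, lam t => ClosedUnder (n + 1) t
  | n, app t r => ClosedUnder n t ∧ ClosedUnder n r
  | _, zero => True
  | n, smul _ t => ClosedUnder n t
  | n, add t r => ClosedUnder n t ∧ ClosedUnder n r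

/-- Closed terms. -/
def Closed (t : Trm S) : Prop := ClosedUnder 0 t

def size : Trm S → ℕ
  | var _ => 1
  | lam t => size t + 1
  | app t r => size t + size r + 1
  | zero => 1
  | smul _ t => size t + 1
  | add t r => size t + size r + 1

/-- `(t) r₁ … rₙ`. -/
def appList (t : Trm S) (l : List (Trm S)) : Trm S := l.foldl app t

/-- `t + u₁ + … + uₙ`. -/
def sumList (t : Trm S) (l : List (Trm S)) : Trm S := l.foldl add t

/-- Lifting of a simultaneous substitution under a binder. -/
def msubstLift (ρ : ℕ → Trm S) : ℕ → Trm S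
  | 0 => var 0
  | n + 1 => shift 1 0 (ρ n)

/-- Simultaneous substitution of all free variables. -/
def msubst : (ℕ → Trm S) → Trm S → Trm S
  | ρ, var k => ρ k
  | ρ, lam t => lam (msubst (msubstLift ρ) t)
  | ρ, app t r => app (msubst ρ t) (msubst ρ r)
  | _, zero => zero
  | ρ, smul a t => smul a (msubst ρ t)
  | ρ, add t r => add (msubst ρ t) (msubst ρ r)

end Trm

/-! ### AC equivalence of terms (`+` associative and commutative) -/

inductive ACeq {S : Type} : Trm S → Trm S → Prop
  | refl (t : Trm S) : ACeq t t
  | symm {t u : Trm S} : ACeq t u → ACeq u t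
  | trans {t u v : Trm S} : ACeq t u → ACeq u v → ACeq t v
  | comm (t u : Trm S) : ACeq (Trm.add t u) (Trm.add u t)
  | assoc (t u v : Trm S) : ACeq (Trm.add (Trm.add t u) v) (Trm.add t (Trm.add u v))
  | lamCong {t t' : Trm S} : ACeq t t' → ACeq (Trm.lam t) (Trm.lam t')
  | appCong {t t' r r' : Trm S} : ACeq t t' → ACeq r r' → ACeq (Trm.app t r) (Trm.app t' r')
  | smulCong (a : S) {t t' : Trm S} : ACeq t t' → ACeq (Trm.smul a t) (Trm.smul a t')
  | addCong {t t' r r' : Trm S} : ACeq t t' → ACeq r r' → ACeq (Trm.add t r) (Trm.add t' r')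

/-! ### Reduction -/

/-- `t` is closed and normal (w.r.t. the step relation `St`). -/
def ClosedNormal {S : Type} (St : Trm S → Trm S → Prop) (t : Trm S) : Prop :=
  t.Closed ∧ ∀ u, ¬ St t u

/-- Root rules and one-level contextual closure, parameterised by the step relation `St`
used on proper subterms (both for congruence and for the closed-normal side conditions). -/
inductive Core {S : Type} [CommRing S] (St : Trm S → Trm S → Prop) : Trm S → Trm S → Prop
  -- Elementary rules
  | addZero (t : Trm S) : Core St (Trm.add t Trm.zero) t
  | zeroSmul (t : Trm S) : Core St (Trm.smul 0 t) Trm.zero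
  | oneSmul (t : Trm S) : Core St (Trm.smul 1 t) t
  | smulZero (a : S) : Core St (Trm.smul a Trm.zero) Trm.zero
  | smulSmul (a b : S) (t : Trm S) : Core St (Trm.smul a (Trm.smul b t)) (Trm.smul (a * b) t)
  | smulAdd (a : S) (t r : Trm S) :
      Core St (Trm.smul a (Trm.add t r)) (Trm.add (Trm.smul a t) (Trm.smul a r))
  -- Factorisation rules (side condition : t closed normal)
  | fact1 (a b : S) (t : Trm S) : ClosedNormal St t →
      Core St (Trm.add (Trm.smul a t) (Trm.smul b t)) (Trm.smul (a + b) t)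
  | fact2 (a : S) (t : Trm S) : ClosedNormal St t →
      Core St (Trm.add (Trm.smul a t) t) (Trm.smul (a + 1) t)
  | fact3 (t : Trm S) : ClosedNormal St t →
      Core St (Trm.add t t) (Trm.smul (1 + 1) t)
  -- Application rules
  | appAddL (t r u : Trm S) : ClosedNormal St (Trm.add t r) →
      Core St (Trm.app (Trm.add t r) u) (Trm.add (Trm.app t u) (Trm.app r u))
  | appAddR (u t r : Trm S) : ClosedNormal St (Trm.add t r) →
      Core St (Trm.app u (Trm.add t r)) (Trm.add (Trm.app u t) (Trm.app u r))
  | appSmulL (a : S) (t r : Trm S) : ClosedNormal St t →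
      Core St (Trm.app (Trm.smul a t) r) (Trm.smul a (Trm.app t r))
  | appSmulR (a : S) (r t : Trm S) : ClosedNormal St t →
      Core St (Trm.app r (Trm.smul a t)) (Trm.smul a (Trm.app r t))
  | appZeroL (t : Trm S) : Core St (Trm.app Trm.zero t) Trm.zero
  | appZeroR (t : Trm S) : Core St (Trm.app t Trm.zero) Trm.zero
  -- Beta reduction (b a basis term)
  | beta (t b : Trm S) : Trm.IsBasis b → Core St (Trm.app (Trm.lam t) b) (Trm.subst t b 0)
  -- Contextual closure
  | lamCong {t t' : Trm S} : St t t' → Core St (Trm.lam t) (Trm.lam t')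
  | appL {t t' : Trm S} (r : Trm S) : St t t' → Core St (Trm.app t r) (Trm.app t' r)
  | appR (t : Trm S) {r r' : Trm S} : St r r' → Core St (Trm.app t r) (Trm.app t r')
  | smulCong (a : S) {t t' : Trm S} : St t t' → Core St (Trm.smul a t) (Trm.smul a t')
  | addL {t t' : Trm S} (r : Trm S) : St t t' → Core St (Trm.add t r) (Trm.add t' r)
  | addR (t : Trm S) {r r' : Trm S} : St r r' → Core St (Trm.add t r) (Trm.add t r')

/-- Stratified step relation: `StepN n` is the one-step reduction (modulo AC),
adequate for terms of size at most `n`. -/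
def StepN {S : Type} [CommRing S] : ℕ → Trm S → Trm S → Prop
  | 0, _, _ => False
  | n + 1, t, t' => ∃ u u', ACeq t u ∧ Core (StepN n) u u' ∧ ACeq u' t'

/-- One-step reduction of Lineal, on terms considered modulo AC of `+`. -/
def Step {S : Type} [CommRing S] (t t' : Trm S) : Prop := StepN t.size t t'

/-- Many-step reduction. -/
def RedStar {S : Type} [CommRing S] : Trm S → Trm S → Prop := Relation.ReflTransGen Step

/-- `t` is strongly normalising: every reduction sequence from `t` is finite. -/
def StronglyNormalising {S : Type} [CommRing S] (t : Trm S) : Prop :=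
  Acc (fun a b => Step b a) t

/-- The set of strongly normalising terms. -/
def SNset (S : Type) [CommRing S] : Set (Trm S) := { t | StronglyNormalising t }

end Lineal

namespace Lineal

/-! ### Scalar types -/

inductive STy (S : Type) : Type where
  | var : ℕ → STy S
  | arrow : STy S → STy S → STy S
  | all : STy S → STy S
  | smul : S → STy S → STy S
  | zero : STy S

namespace STy

mutual
  /-- Unit types: `U ::= X | U → T | ∀X.U`. -/
  inductive IsUnit {S : Type} : STy S → Prop
    | var (n : ℕ) : IsUnit (STy.var n)
    | arrow {U T : STy S} : IsUnit U → WF T → IsUnit (STy.arrow U T)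
    | all {U : STy S} : IsUnit U → IsUnit (STy.all U)
  /-- Scalar types: `T ::= U | ∀X.T | α.T | 0̄`. -/
  inductive WF {S : Type} : STy S → Prop
    | unit {U : STy S} : IsUnit U → WF U
    | all {T : STy S} : WF T → WF (STy.all T)
    | smul (a : S) {T : STy S} : WF T → WF (STy.smul a T)
    | zero : WF STy.zero
end

variable {S : Type}

/-- de Bruijn shift of type variables. -/
def shiftTV (d : ℕ) : ℕ → STy S → STy S
  | c, var k => if k < c then var k else var (k + d)
  | c, arrow A B => arrow (shiftTV d c A) (shiftTV d c B)
  | c, all T => all (shiftTV d (c + 1) T)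
  | c, smul a T => smul a (shiftTV d c T)
  | _, zero => zero

/-- `T[U / j]`: capture-avoiding substitution for the type variable `j` (removing it). -/
def substTV : STy S → STy S → ℕ → STy S
  | var k, U, j => if k = j then shiftTV j 0 U else if j < k then var (k - 1) else var k
  | arrow A B, U, j => arrow (substTV A U j) (substTV B U j)
  | all T, U, j => all (substTV T U (j + 1))
  | smul a T, U, j => smul a (substTV T U j)
  | zero, _, _ => zero

/-- Abstract the free type variable `n` of `T` (at depth `c`), so that
`all (closeTV T n 0)` is `∀X.T` where `X` is the free variable `n`. -/
def closeTV : STy S → ℕ → ℕ → STy S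
  | var k, n, c => if k < c then var k else if k = n + c then var c else var (k + 1)
  | arrow A B, n, c => arrow (closeTV A n c) (closeTV B n c)
  | all T, n, c => all (closeTV T n (c + 1))
  | smul a T, n, c => smul a (closeTV T n c)
  | zero, _, _ => zero

/-- `T[U / X]` for a *free* type variable named `n` (no binder is removed). -/
def substFreeAux : STy S → ℕ → STy S → ℕ → STy S
  | var k, n, U, c => if k = n + c then shiftTV c 0 U else var k
  | arrow A B, n, U, c => arrow (substFreeAux A n U c) (substFreeAux B n U c)
  | all T, n, U, c => all (substFreeAux T n U (c + 1))
  | smul a T, n, U, c => smul a (substFreeAux T n U c)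
  | zero, _, _, _ => zero

def substFree (T : STy S) (n : ℕ) (U : STy S) : STy S := substFreeAux T n U 0

/-- Free type variables. -/
def ftvAux : STy S → ℕ → Finset ℕ
  | var k, c => if k < c then ∅ else {k - c}
  | arrow A B, c => ftvAux A c ∪ ftvAux B c
  | all T, c => ftvAux T (c + 1)
  | smul _ T, c => ftvAux T c
  | zero, _ => ∅

def ftv (T : STy S) : Finset ℕ := ftvAux T 0

end STy

/-- Free type variables of a context. -/
def ftvCtx {S : Type} (Γ : List (STy S)) : Finset ℕ :=
  Γ.foldr (fun T s => T.ftv ∪ s) ∅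

/-- Type equivalence `≡`: the least congruence with
`α.0̄ ≡ 0̄`, `0.T ≡ 0̄`, `1.T ≡ T`, `α.(β.T) ≡ (α×β).T`, `∀X.α.T ≡ α.∀X.T`. -/
inductive SEq {S : Type} [CommRing S] : STy S → STy S → Prop
  | refl (T : STy S) : SEq T T
  | symm {T T' : STy S} : SEq T T' → SEq T' T
  | trans {T T' T'' : STy S} : SEq T T' → SEq T' T'' → SEq T T''
  | smulZero (a : S) : SEq (STy.smul a STy.zero) STy.zero
  | zeroSmul (T : STy S) : SEq (STy.smul 0 T) STy.zero
  | oneSmul (T : STy S) : SEq (STy.smul 1 T) T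
  | smulSmul (a b : S) (T : STy S) : SEq (STy.smul a (STy.smul b T)) (STy.smul (a * b) T)
  | allSmul (a : S) (T : STy S) : SEq (STy.all (STy.smul a T)) (STy.smul a (STy.all T))
  | arrowCong {U U' T T' : STy S} : SEq U U' → SEq T T' → SEq (STy.arrow U T) (STy.arrow U' T')
  | allCong {T T' : STy S} : SEq T T' → SEq (STy.all T) (STy.all T')
  | smulCong (a : S) {T T' : STy S} : SEq T T' → SEq (STy.smul a T) (STy.smul a T')

/-- `T ≺ R` iff either `R ≡ ∀X.T`, or `T ≡ ∀X.S` and `R ≡ S[U/X]` for some unit type `U`. -/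
def Prec {S : Type} [CommRing S] (T R : STy S) : Prop :=
  (∃ n : ℕ, SEq R (STy.all (STy.closeTV T n 0))) ∨
  (∃ Sb U : STy S, STy.IsUnit U ∧ SEq T (STy.all Sb) ∧ SEq R (STy.substTV Sb U 0))

/-- `⪯` : reflexive and transitive closure of `≺`. -/
def PrecEq {S : Type} [CommRing S] : STy S → STy S → Prop := Relation.ReflTransGen Prec

/-! ### The Scalar typing judgment -/

inductive Typ {S : Type} [CommRing S] : List (STy S) → Trm S → STy S → Prop
  | ax {Γ : List (STy S)} {n : ℕ} {U : STy S} : Γ[n]? = some U → Typ Γ (Trm.var n) U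
  | equiv {Γ : List (STy S)} {t : Trm S} {T T' : STy S} : Typ Γ t T → SEq T T' → Typ Γ t T'
  | arrE {Γ : List (STy S)} {t r : Trm S} {U T : STy S} {a b : S} :
      Typ Γ t (STy.smul a (STy.arrow U T)) → Typ Γ r (STy.smul b U) →
      Typ Γ (Trm.app t r) (STy.smul (a * b) T)
  | arrI {Γ : List (STy S)} {t : Trm S} {U T : STy S} :
      STy.IsUnit U → Typ (U :: Γ) t T → Typ Γ (Trm.lam t) (STy.arrow U T)
  | allE {Γ : List (STy S)} {t : Trm S} {T U : STy S} :
      Typ Γ t (STy.all T) → STy.IsUnit U → Typ Γ t (STy.substTV T U 0)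
  | allI {Γ : List (STy S)} {t : Trm S} {T : STy S} :
      Typ (Γ.map (STy.shiftTV 1 0)) t T → Typ Γ t (STy.all T)
  | ax0 {Γ : List (STy S)} : Typ Γ Trm.zero STy.zero
  | addI {Γ : List (STy S)} {t r : Trm S} {T : STy S} {a b : S} :
      Typ Γ t (STy.smul a T) → Typ Γ r (STy.smul b T) →
      Typ Γ (Trm.add t r) (STy.smul (a + b) T)
  | smulI {Γ : List (STy S)} {t : Trm S} {T : STy S} (a : S) :
      Typ Γ t T → Typ Γ (Trm.smul a t) (STy.smul a T)

/-! ### λ2^la -/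

inductive FTy : Type where
  | var : ℕ → FTy
  | arrow : FTy → FTy → FTy
  | all : FTy → FTy

namespace FTy

def shiftTV (d : ℕ) : ℕ → FTy → FTy
  | c, var k => if k < c then var k else var (k + d)
  | c, arrow A B => arrow (shiftTV d c A) (shiftTV d c B)
  | c, all A => all (shiftTV d (c + 1) A)

def substTV : FTy → FTy → ℕ → FTy
  | var k, B, j => if k = j then shiftTV j 0 B else if j < k then var (k - 1) else var k
  | arrow A C, B, j => arrow (substTV A B j) (substTV C B j)
  | all A, B, j => all (substTV A B (j + 1))

end FTy

/-- The typing judgment of λ2^la : System F rules over Lineal terms plus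
`ax0`, `+I` and `sI`. -/
inductive FTyp {S : Type} [CommRing S] : List FTy → Trm S → FTy → Prop
  | ax {Γ : List FTy} {n : ℕ} {A : FTy} : Γ[n]? = some A → FTyp Γ (Trm.var n) A
  | arrE {Γ : List FTy} {t r : Trm S} {A B : FTy} :
      FTyp Γ t (FTy.arrow A B) → FTyp Γ r A → FTyp Γ (Trm.app t r) B
  | arrI {Γ : List FTy} {t : Trm S} {A B : FTy} :
      FTyp (A :: Γ) t B → FTyp Γ (Trm.lam t) (FTy.arrow A B)
  | allE {Γ : List FTy} {t : Trm S} {A : FTy} (B : FTy) :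
      FTyp Γ t (FTy.all A) → FTyp Γ t (FTy.substTV A B 0)
  | allI {Γ : List FTy} {t : Trm S} {A : FTy} :
      FTyp (Γ.map (FTy.shiftTV 1 0)) t A → FTyp Γ t (FTy.all A)
  | ax0 {Γ : List FTy} (A : FTy) : FTyp Γ Trm.zero A
  | addI {Γ : List FTy} {t r : Trm S} {A : FTy} :
      FTyp Γ t A → FTyp Γ r A → FTyp Γ (Trm.add t r) A
  | smulI {Γ : List FTy} {t : Trm S} {A : FTy} (a : S) :
      FTyp Γ t A → FTyp Γ (Trm.smul a t) A

/-! ### Saturated sets and the interpretation of λ2^la types -/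

/-- Saturated subsets of SN. -/
structure IsSaturated {S : Type} [CommRing S] (X : Set (Trm S)) : Prop where
  subset_sn : X ⊆ SNset S
  var_app : ∀ (n : ℕ) (l : List (Trm S)), (∀ u ∈ l, u ∈ SNset S) →
      Trm.appList (Trm.var n) l ∈ X
  beta_exp : ∀ (v b : Trm S) (l : List (Trm S)), b.IsBasis →
      Trm.appList (Trm.subst v b 0) l ∈ X → Trm.appList (Trm.app (Trm.lam v) b) l ∈ X
  add_mem : ∀ {t u : Trm S}, t ∈ X → u ∈ X → Trm.add t u ∈ X
  smul_iff : ∀ (a : S) (t : Trm S), t ∈ X ↔ Trm.smul a t ∈ X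
  sum_app : ∀ (u : Trm S) (us l : List (Trm S)),
      (∀ v ∈ u :: us, Trm.appList v l ∈ X) → Trm.appList (Trm.sumList u us) l ∈ X
  app_sum : ∀ (t v : Trm S) (vs l : List (Trm S)),
      (∀ w ∈ v :: vs, Trm.appList (Trm.app t w) l ∈ X) →
      Trm.appList (Trm.app t (Trm.sumList v vs)) l ∈ X
  smul_head : ∀ (a : S) (t : Trm S) (l : List (Trm S)),
      Trm.smul a (Trm.appList t l) ∈ X ↔ Trm.appList (Trm.smul a t) l ∈ X
  smul_arg : ∀ (a : S) (t : Trm S) (l₁ : List (Trm S)) (u : Trm S) (l₂ : List (Trm S)),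
      Trm.smul a (Trm.appList t (l₁ ++ u :: l₂)) ∈ X ↔
      Trm.appList t (l₁ ++ Trm.smul a u :: l₂) ∈ X
  zero_mem : Trm.zero ∈ X
  zero_app : ∀ l : List (Trm S), (∀ u ∈ l, u ∈ SNset S) → Trm.appList Trm.zero l ∈ X
  app_zero : ∀ (t : Trm S) (l : List (Trm S)), t ∈ SNset S → (∀ u ∈ l, u ∈ SNset S) →
      Trm.appList (Trm.app t Trm.zero) l ∈ X

/-- Extension of a type-variable valuation (de Bruijn). -/
def consVal {S : Type} (Y : Set (Trm S)) (ξ : ℕ → Set (Trm S)) : ℕ → Set (Trm S)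
  | 0 => Y
  | n + 1 => ξ n

/-- Interpretation `⟦A⟧_ξ` of a λ2^la type. -/
def FTy.interp {S : Type} [CommRing S] : FTy → (ℕ → Set (Trm S)) → Set (Trm S)
  | FTy.var n, ξ => ξ n
  | FTy.arrow A B, ξ => { F | ∀ s ∈ interp A ξ, Trm.app F s ∈ interp B ξ }
  | FTy.all A, ξ => ⋂ Y ∈ { X : Set (Trm S) | IsSaturated X }, interp A (consVal Y ξ)

/-- `ρ, ξ ⊨ Γ`. -/
def SatCtx {S : Type} [CommRing S] (ρ : ℕ → Trm S) (ξ : ℕ → Set (Trm S))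
    (Γ : List FTy) : Prop :=
  ∀ (n : ℕ) (A : FTy), Γ[n]? = some A → ρ n ∈ FTy.interp A ξ

/-- The `♮` map erasing scalars, sending `0̄` to a fixed λ2^la type `A`. -/
def STy.flat {S : Type} (A : FTy) : STy S → FTy
  | STy.var n => FTy.var n
  | STy.arrow U T => FTy.arrow (flat A U) (flat A T)
  | STy.all T => FTy.all (flat A T)
  | STy.smul _ T => flat A T
  | STy.zero => A

end Lineal

/-!
(1) goes by induction on the derivation of `Γ ⊢ λx.t : T`, which can only end with `→I`, `≡`, `∀E`
or `∀I`. For `→I` the body type must be made a scalar type: every type derivable in a context of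
unit types is equivalent to one, which is checked on a normal form for `≡` that pulls scalars to
the front. With de Bruijn indices the premise of `∀I` lives in a shifted context, so its bound
variable is renamed to a fresh free variable `n`; `⪯` is stable under this renaming, and
`T[n/X] ≺ ∀X.T`.

(2): over a nonzero ring the normal form shows that `≡` never relates an arrow to a `∀`-type and
is injective on arrows. Reading the derivation of `Γ ⊢ λx.t : U → T` backwards through `≡`, `∀E`
and `∀I` one keeps track of the chain of instantiations that leads to `U → T`; an `∀I` step is
undone by substituting the instantiated type into its premise. Over the zero ring all types are
equivalent and (2) follows from (1).
-/

namespace Lineal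
namespace STy

variable {S : Type}

theorem shiftTV_zero (T : STy S) (c : ℕ) : shiftTV 0 c T = T := by
  induction T generalizing c <;> simp_all [shiftTV]

theorem shiftTV_shiftTV (V : STy S) {a d e c : ℕ} (hec : e ≤ c) (hce : c ≤ e + d) :
    shiftTV a c (shiftTV d e V) = shiftTV (a + d) e V := by
  induction V generalizing e c with
  | var k => grind [shiftTV]
  | all T ih => simp only [shiftTV, ih (Nat.succ_le_succ hec) (by omega)]
  | _ => simp_all [shiftTV]

theorem substTV_shiftTV_succ (V W : STy S) {c d i : ℕ} (hci : c ≤ i) (hic : i ≤ c + d) :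
    substTV (shiftTV (d + 1) c V) W i = shiftTV d c V := by
  induction V generalizing c i with
  | var k => grind [shiftTV, substTV]
  | all T ih => simp only [shiftTV, substTV, ih (Nat.succ_le_succ hci) (by omega)]
  | _ => simp_all [shiftTV, substTV]

theorem substTV_shiftTV_self (W V : STy S) (c : ℕ) : substTV (shiftTV 1 c W) V c = W := by
  simpa [shiftTV_zero] using substTV_shiftTV_succ W V (d := 0) le_rfl le_rfl

theorem substTV_shiftTV_add (U V : STy S) {c j : ℕ} (d : ℕ) (hcj : c ≤ j) :
    substTV (shiftTV d c U) V (j + d) = shiftTV d c (substTV U V j) := by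
  induction U generalizing c j with
  | var k => grind [shiftTV, substTV, shiftTV_shiftTV]
  | all T ih =>
      simp only [shiftTV, substTV]
      rw [← ih (Nat.succ_le_succ hcj), Nat.add_right_comm]
  | _ => simp_all [shiftTV, substTV]

theorem substTV_substTV (T U V : STy S) {i j : ℕ} (hij : i ≤ j) :
    substTV (substTV T U i) V j = substTV (substTV T V (j + 1)) (substTV U V (j - i)) i := by
  induction T generalizing i j with
  | var k =>
      have := substTV_shiftTV_add U V (c := 0) (j := j - i) i (Nat.zero_le _)
      rw [Nat.sub_add_cancel hij] at this
      grind [shiftTV, substTV, substTV_shiftTV_succ]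
  | all T ih =>
      simp only [substTV, ih (Nat.succ_le_succ hij), Nat.succ_sub_succ]
  | _ => simp_all [substTV]

theorem mem_ftvAux_var {x k c : ℕ} :
    x ∈ ftvAux (var k : STy S) c ↔ c ≤ k ∧ x = k - c := by
  simp only [ftvAux]
  split_ifs <;> simp <;> omega

theorem closeTV_of_not_mem (T : STy S) {m c : ℕ} (hm : m ∉ ftvAux T c) :
    closeTV T m c = shiftTV 1 c T := by
  induction T generalizing c with
  | var k => rw [mem_ftvAux_var] at hm; grind [closeTV, shiftTV]
  | _ => simp_all [closeTV, shiftTV, ftvAux]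

theorem substTV_closeTV (T : STy S) (m c : ℕ) : substTV (closeTV T m c) (var m) c = T := by
  induction T generalizing c with
  | var k => grind [closeTV, substTV, shiftTV]
  | _ => simp_all [closeTV, substTV]

theorem closeTV_substTV (T : STy S) {n c : ℕ} (hn : n + 1 ∉ ftvAux T c) :
    closeTV (substTV T (var n) c) n c = T := by
  induction T generalizing c with
  | var k => rw [mem_ftvAux_var] at hn; grind [closeTV, substTV, shiftTV]
  | _ => simp_all [closeTV, substTV, ftvAux]

theorem substTV_closeTV_comm (A : STy S) {m n c : ℕ} (hmn : m ≠ n + 1)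
    (hn : n + 1 ∉ ftvAux A c) :
    substTV (closeTV A m c) (var n) (c + 1)
      = closeTV (substTV A (var n) c) (if m = 0 then n else m - 1) c := by
  induction A generalizing c with
  | var k => rw [mem_ftvAux_var] at hn; grind [closeTV, substTV, shiftTV]
  | _ => simp_all [closeTV, substTV, ftvAux]

theorem mem_ftvAux_substTV_var (B : STy S) {n c x : ℕ}
    (hx : x ∈ ftvAux (substTV B (var n) c) c) : x = n ∨ x + 1 ∈ ftvAux B c := by
  induction B generalizing c with
  | var k => grind [substTV, shiftTV, mem_ftvAux_var]
  | arrow A B ihA ihB =>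
      simp only [substTV, ftvAux, Finset.mem_union] at hx ⊢
      rcases hx with h | h
      · exact (ihA h).imp_right Or.inl
      · exact (ihB h).imp_right Or.inr
  | _ => simp_all [substTV, ftvAux]

theorem exists_substTV_closeTV_eq (A : STy S) (m : ℕ) {n : ℕ} (hn : ∀ k ∈ ftv A, k < n) :
    ∃ m', (closeTV A m 0).substTV (var n) 1 = closeTV (A.substTV (var n) 0) m' 0 := by
  have hn₁ : n + 1 ∉ ftvAux A 0 := fun h => by have := hn _ h; omega
  by_cases hm : m = n + 1
  · refine ⟨n + 1, ?_⟩
    have hfresh : n + 1 ∉ ftvAux (A.substTV (var n) 0) 0 := fun h => by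
      rcases mem_ftvAux_substTV_var A h with h | h
      · omega
      · have := hn _ h; omega
    rw [hm, closeTV_of_not_mem A hn₁, closeTV_of_not_mem _ hfresh]
    exact substTV_shiftTV_add A (var n) 1 le_rfl
  · exact ⟨_, substTV_closeTV_comm A hm hn₁⟩

theorem exists_forall_mem_ftv_lt (T : STy S) : ∃ M, ∀ n, M ≤ n → ∀ k ∈ ftv T, k < n :=
  have ⟨M, hM⟩ := (ftv T).exists_nat_subset_range
  ⟨M, fun _ hn _ hk => (Finset.mem_range.1 (hM hk)).trans_le hn⟩

theorem map_substTV_map_shiftTV (Γ : List (STy S)) (V : STy S) :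
    (Γ.map (shiftTV 1 0)).map (·.substTV V 0) = Γ := by
  simp [List.map_map, Function.comp_def, substTV_shiftTV_self]

mutual

theorem IsUnit.shiftTV {T : STy S} (h : IsUnit T) (d c : ℕ) : IsUnit (T.shiftTV d c) :=
  match h with
  | .var k => by simp only [STy.shiftTV]; split <;> exact .var _
  | .arrow hU hT => .arrow (hU.shiftTV d c) (hT.shiftTV d c)
  | .all hU => .all (hU.shiftTV d (c + 1))

theorem WF.shiftTV {T : STy S} (h : WF T) (d c : ℕ) : WF (T.shiftTV d c) :=
  match h with
  | .unit hU => .unit (hU.shiftTV d c)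
  | .all hT => .all (hT.shiftTV d (c + 1))
  | .smul a hT => .smul a (hT.shiftTV d c)
  | .zero => .zero

end

mutual

theorem IsUnit.substTV {T V : STy S} (h : IsUnit T) (hV : IsUnit V) (j : ℕ) :
    IsUnit (T.substTV V j) :=
  match h with
  | .var k => by
      simp only [STy.substTV]
      split
      · exact hV.shiftTV j 0
      · split <;> exact .var _
  | .arrow hU hT => .arrow (hU.substTV hV j) (hT.substTV hV j)
  | .all hU => .all (hU.substTV hV (j + 1))

theorem WF.substTV {T V : STy S} (h : WF T) (hV : IsUnit V) (j : ℕ) : WF (T.substTV V j) :=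
  match h with
  | .unit hU => .unit (hU.substTV hV j)
  | .all hT => .all (hT.substTV hV (j + 1))
  | .smul a hT => .smul a (hT.substTV hV j)
  | .zero => .zero

end

end STy

open STy

variable {S : Type} [CommRing S]

theorem SEq.shiftTV {T T' : STy S} (h : SEq T T') (d c : ℕ) :
    SEq (T.shiftTV d c) (T'.shiftTV d c) := by
  induction h generalizing c with
  | refl => exact .refl _
  | symm _ ih => exact (ih c).symm
  | trans _ _ ih₁ ih₂ => exact (ih₁ c).trans (ih₂ c)
  | arrowCong _ _ ih₁ ih₂ => exact .arrowCong (ih₁ c) (ih₂ c)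
  | allCong _ ih => exact .allCong (ih (c + 1))
  | smulCong a _ ih => exact .smulCong a (ih c)
  | smulZero => exact .smulZero _
  | zeroSmul => exact .zeroSmul _
  | oneSmul => exact .oneSmul _
  | smulSmul => exact .smulSmul _ _ _
  | allSmul => exact .allSmul _ _

theorem SEq.substTV {T T' : STy S} (h : SEq T T') (V : STy S) (j : ℕ) :
    SEq (T.substTV V j) (T'.substTV V j) := by
  induction h generalizing j with
  | refl => exact .refl _
  | symm _ ih => exact (ih j).symm
  | trans _ _ ih₁ ih₂ => exact (ih₁ j).trans (ih₂ j)
  | arrowCong _ _ ih₁ ih₂ => exact .arrowCong (ih₁ j) (ih₂ j)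
  | allCong _ ih => exact .allCong (ih (j + 1))
  | smulCong a _ ih => exact .smulCong a (ih j)
  | smulZero => exact .smulZero _
  | zeroSmul => exact .zeroSmul _
  | oneSmul => exact .oneSmul _
  | smulSmul => exact .smulSmul _ _ _
  | allSmul => exact .allSmul _ _

theorem seq_all_zero : SEq (STy.all (STy.zero : STy S)) STy.zero :=
  ((SEq.allCong (SEq.smulZero 0).symm).trans (SEq.allSmul 0 _)).trans (SEq.zeroSmul _)

theorem seq_of_one_eq_zero (h1 : (1 : S) = 0) (A B : STy S) : SEq A B := by
  have seq_zero (C : STy S) : SEq C STy.zero :=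
    (h1 ▸ (SEq.oneSmul C).symm : SEq C (STy.smul 0 C)).trans (SEq.zeroSmul C)
  exact (seq_zero A).trans (seq_zero B).symm

namespace STy

open Classical in
noncomputable def smulNF (a : S) (N : STy S) : STy S :=
  if a = 0 then zero else smul a N

/-- Normal form for `≡`: either `0̄` or `α.N` with `α ≠ 0`, the scalar of a `∀`-body being
pulled in front of the `∀`. -/
noncomputable def nf : STy S → STy S
  | var k => smulNF 1 (var k)
  | zero => zero
  | arrow A B => smulNF 1 (arrow (nf A) (nf B))
  | all T =>
      match nf T with
      | smul a N => smul a (all N)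
      | _ => zero
  | smul a T =>
      match nf T with
      | smul b N => smulNF (a * b) N
      | _ => zero

theorem smulNF_of_eq_zero {a : S} (h : a = 0) (N : STy S) : smulNF a N = zero := by
  simp [smulNF, h]

theorem smulNF_of_ne_zero {a : S} (h : a ≠ 0) (N : STy S) : smulNF a N = smul a N := by
  simp [smulNF, h]

theorem nf_var (k : ℕ) : nf (var k : STy S) = smulNF 1 (var k) := by simp [nf]

theorem nf_zero : nf (zero : STy S) = zero := by simp [nf]

theorem nf_arrow (A B : STy S) : nf (arrow A B) = smulNF 1 (arrow (nf A) (nf B)) := by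
  simp [nf]

theorem nf_all_of_nf_eq_zero {T : STy S} (h : nf T = zero) : nf (all T) = zero := by
  simp only [nf, h]

theorem nf_all_of_nf_eq_smul {T N : STy S} {a : S} (h : nf T = smul a N) :
    nf (all T) = smul a (all N) := by
  simp only [nf, h]

theorem nf_smul_of_nf_eq_zero {T : STy S} (a : S) (h : nf T = zero) : nf (smul a T) = zero := by
  simp only [nf, h]

theorem nf_smul_of_nf_eq_smul {T N : STy S} (a : S) {b : S} (h : nf T = smul b N) :
    nf (smul a T) = smulNF (a * b) N := by
  simp only [nf, h]

theorem nf_smul_eq_zero {T N : STy S} {a b : S} (h : nf T = smul b N) (hab : a * b = 0) :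
    nf (smul a T) = zero := by
  rw [nf_smul_of_nf_eq_smul a h, smulNF_of_eq_zero hab]

theorem nf_smul_eq_smul {T N : STy S} {a b : S} (h : nf T = smul b N) (hab : a * b ≠ 0) :
    nf (smul a T) = smul (a * b) N := by
  rw [nf_smul_of_nf_eq_smul a h, smulNF_of_ne_zero hab]

theorem nf_eq_zero_or (T : STy S) : nf T = zero ∨ ∃ a N, nf T = smul a N ∧ a ≠ 0 := by
  have smulNF_eq (a : S) (N : STy S) :
      smulNF a N = zero ∨ ∃ b M, smulNF a N = smul b M ∧ b ≠ 0 := by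
    by_cases ha : a = 0 <;> simp [smulNF, ha]
  induction T with
  | var k => rw [nf_var]; exact smulNF_eq 1 _
  | arrow A B => rw [nf_arrow]; exact smulNF_eq 1 _
  | all T ih =>
      obtain h | ⟨a, N, h, ha⟩ := ih
      · exact .inl (nf_all_of_nf_eq_zero h)
      · exact .inr ⟨a, all N, nf_all_of_nf_eq_smul h, ha⟩
  | smul a T ih =>
      obtain h | ⟨b, N, h, -⟩ := ih
      · exact .inl (nf_smul_of_nf_eq_zero a h)
      · rw [nf_smul_of_nf_eq_smul a h]; exact smulNF_eq _ _
  | zero => exact .inl nf_zero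

end STy

theorem seq_smulNF (a : S) (N : STy S) : SEq (smul a N) (smulNF a N) := by
  by_cases ha : a = 0
  · rw [smulNF_of_eq_zero ha]; exact ha ▸ SEq.zeroSmul N
  · rw [smulNF_of_ne_zero ha]; exact .refl _

theorem seq_nf (T : STy S) : SEq T (nf T) := by
  induction T with
  | var k => rw [nf_var]; exact (SEq.oneSmul _).symm.trans (seq_smulNF 1 _)
  | arrow A B ihA ihB =>
      rw [nf_arrow]
      exact ((SEq.arrowCong ihA ihB).trans (SEq.oneSmul _).symm).trans (seq_smulNF 1 _)
  | all T ih =>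
      obtain h | ⟨a, N, h, -⟩ := nf_eq_zero_or T
      · rw [nf_all_of_nf_eq_zero h]; exact (SEq.allCong (h ▸ ih)).trans seq_all_zero
      · rw [nf_all_of_nf_eq_smul h]; exact (SEq.allCong (h ▸ ih)).trans (SEq.allSmul a N)
  | smul a T ih =>
      obtain h | ⟨b, N, h, -⟩ := nf_eq_zero_or T
      · rw [nf_smul_of_nf_eq_zero a h]; exact (SEq.smulCong a (h ▸ ih)).trans (SEq.smulZero a)
      · rw [nf_smul_of_nf_eq_smul a h]
        exact ((SEq.smulCong a (h ▸ ih)).trans (SEq.smulSmul a b N)).trans (seq_smulNF _ N)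
  | zero => rw [nf_zero]; exact .refl _

theorem SEq.nf_eq {T T' : STy S} (h : SEq T T') : nf T = nf T' := by
  induction h with
  | refl => rfl
  | symm _ ih => exact ih.symm
  | trans _ _ ih₁ ih₂ => exact ih₁.trans ih₂
  | smulZero a => rw [nf_smul_of_nf_eq_zero a nf_zero, nf_zero]
  | zeroSmul T =>
      obtain h | ⟨b, N, h, -⟩ := nf_eq_zero_or T
      · rw [nf_smul_of_nf_eq_zero 0 h, nf_zero]
      · rw [nf_smul_of_nf_eq_smul 0 h, nf_zero, smulNF_of_eq_zero (zero_mul b)]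
  | oneSmul T =>
      obtain h | ⟨b, N, h, hb⟩ := nf_eq_zero_or T
      · rw [nf_smul_of_nf_eq_zero 1 h, h]
      · rw [nf_smul_of_nf_eq_smul 1 h, h, one_mul, smulNF_of_ne_zero hb]
  | smulSmul a b T =>
      obtain h | ⟨c, N, h, -⟩ := nf_eq_zero_or T
      · rw [nf_smul_of_nf_eq_zero a (nf_smul_of_nf_eq_zero b h), nf_smul_of_nf_eq_zero _ h]
      · rw [nf_smul_of_nf_eq_smul (a * b) h, mul_assoc]
        by_cases hbc : b * c = 0
        · rw [nf_smul_of_nf_eq_zero a (nf_smul_eq_zero h hbc), hbc, mul_zero,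
            smulNF_of_eq_zero rfl]
        · rw [nf_smul_of_nf_eq_smul a (nf_smul_eq_smul h hbc)]
  | allSmul a T =>
      obtain h | ⟨c, N, h, -⟩ := nf_eq_zero_or T
      · rw [nf_all_of_nf_eq_zero (nf_smul_of_nf_eq_zero a h),
          nf_smul_of_nf_eq_zero a (nf_all_of_nf_eq_zero h)]
      · rw [nf_smul_of_nf_eq_smul a (nf_all_of_nf_eq_smul h)]
        by_cases hac : a * c = 0
        · rw [smulNF_of_eq_zero hac, nf_all_of_nf_eq_zero (nf_smul_eq_zero h hac)]
        · rw [smulNF_of_ne_zero hac, nf_all_of_nf_eq_smul (nf_smul_eq_smul h hac)]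
  | arrowCong _ _ ih₁ ih₂ => rw [nf_arrow, nf_arrow, ih₁, ih₂]
  | @allCong T T' _ ih =>
      obtain h | ⟨c, N, h, -⟩ := nf_eq_zero_or T
      · rw [nf_all_of_nf_eq_zero h, nf_all_of_nf_eq_zero (ih ▸ h)]
      · rw [nf_all_of_nf_eq_smul h, nf_all_of_nf_eq_smul (ih ▸ h)]
  | @smulCong a T T' _ ih =>
      obtain h | ⟨c, N, h, -⟩ := nf_eq_zero_or T
      · rw [nf_smul_of_nf_eq_zero a h, nf_smul_of_nf_eq_zero a (ih ▸ h)]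
      · rw [nf_smul_of_nf_eq_smul a h, nf_smul_of_nf_eq_smul a (ih ▸ h)]

theorem seq_iff_nf_eq {T T' : STy S} : SEq T T' ↔ nf T = nf T' :=
  ⟨SEq.nf_eq, fun h => (seq_nf T).trans (h ▸ (seq_nf T').symm)⟩

theorem nf_arrow_of_one_ne_zero (h1 : (1 : S) ≠ 0) (A B : STy S) :
    nf (arrow A B) = smul 1 (arrow (nf A) (nf B)) := by
  rw [nf_arrow, smulNF_of_ne_zero h1]

theorem SEq.of_arrow_arrow (h1 : (1 : S) ≠ 0) {A B A' B' : STy S}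
    (h : SEq (arrow A B) (arrow A' B')) : SEq A A' ∧ SEq B B' := by
  have h := h.nf_eq
  simp only [nf_arrow_of_one_ne_zero h1, smul.injEq, arrow.injEq] at h
  exact ⟨seq_iff_nf_eq.2 h.2.1, seq_iff_nf_eq.2 h.2.2⟩

theorem SEq.not_arrow_all (h1 : (1 : S) ≠ 0) (A B C : STy S) : ¬ SEq (arrow A B) (all C) := by
  intro h
  have h := h.nf_eq
  rw [nf_arrow_of_one_ne_zero h1] at h
  obtain hC | ⟨a, N, hC, -⟩ := nf_eq_zero_or C
  · rw [nf_all_of_nf_eq_zero hC] at h; cases h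
  · rw [nf_all_of_nf_eq_smul hC] at h; cases h

theorem SEq.of_all_all {A B : STy S} (h : SEq (all A) (all B)) : SEq A B := by
  have h := h.nf_eq
  rw [seq_iff_nf_eq]
  obtain hA | ⟨a, N, hA, -⟩ := nf_eq_zero_or A <;>
    obtain hB | ⟨b, M, hB, -⟩ := nf_eq_zero_or B
  · rw [hA, hB]
  · rw [nf_all_of_nf_eq_zero hA, nf_all_of_nf_eq_smul hB] at h; cases h
  · rw [nf_all_of_nf_eq_smul hA, nf_all_of_nf_eq_zero hB] at h; cases h
  · rw [nf_all_of_nf_eq_smul hA, nf_all_of_nf_eq_smul hB] at h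
    simp only [smul.injEq, all.injEq] at h
    rw [hA, hB, h.1, h.2]

namespace STy

mutual

/-- Shape of `N` when `1.N` is the normal form of a unit type. -/
inductive IsUnitNF : STy S → Prop
  | var (k : ℕ) : IsUnitNF (var k)
  | arrow {P Q : STy S} : IsUnitNF P → IsWFNF Q → IsUnitNF (arrow (smul 1 P) Q)
  | all {P : STy S} : IsUnitNF P → IsUnitNF (all P)

/-- Shape of the normal form of a scalar type. -/
inductive IsWFNF : STy S → Prop
  | zero : IsWFNF zero
  | smul (c : S) {N : STy S} : IsUnitNF N → IsWFNF (smul c N)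

end

theorem IsUnitNF.isWFNF_of_arrow {A B : STy S} (h : IsUnitNF (STy.arrow A B)) :
    IsWFNF B := by
  cases h with | arrow _ h => exact h

theorem IsUnitNF.of_all {N : STy S} (h : IsUnitNF (STy.all N)) : IsUnitNF N := by
  cases h with | all h => exact h

theorem IsWFNF.of_smul {c : S} {N : STy S} (h : IsWFNF (STy.smul c N)) : IsUnitNF N := by
  cases h with | smul _ h => exact h

end STy

mutual

theorem STy.IsUnitNF.exists_isUnit_seq {N : STy S} (h : IsUnitNF N) :
    ∃ U, IsUnit U ∧ SEq N U :=
  match h with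
  | .var k => ⟨var k, .var k, .refl _⟩
  | .arrow hP hQ =>
      have ⟨U, hU, hPU⟩ := hP.exists_isUnit_seq
      have ⟨W, hW, hQW⟩ := hQ.exists_wf_seq
      ⟨arrow U W, .arrow hU hW, .arrowCong ((SEq.oneSmul _).trans hPU) hQW⟩
  | .all hP =>
      have ⟨U, hU, hPU⟩ := hP.exists_isUnit_seq
      ⟨all U, .all hU, .allCong hPU⟩

theorem STy.IsWFNF.exists_wf_seq {N : STy S} (h : IsWFNF N) : ∃ W, WF W ∧ SEq N W :=
  match h with
  | .zero => ⟨zero, .zero, .refl _⟩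
  | .smul c hN =>
      have ⟨U, hU, hNU⟩ := hN.exists_isUnit_seq
      ⟨smul c U, .smul c (.unit hU), .smulCong c hNU⟩

end

mutual

theorem STy.IsUnit.nf_eq (h1 : (1 : S) ≠ 0) {T : STy S} (h : IsUnit T) :
    ∃ P, nf T = smul 1 P ∧ IsUnitNF P :=
  match h with
  | .var k => ⟨var k, by rw [nf_var, smulNF_of_ne_zero h1], .var k⟩
  | @IsUnit.arrow _ U T hU hT =>
      have ⟨P, hUP, hP⟩ := hU.nf_eq h1
      ⟨arrow (smul 1 P) (nf T), by rw [nf_arrow_of_one_ne_zero h1, hUP],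
        .arrow hP (hT.isWFNF_nf h1)⟩
  | .all hU =>
      have ⟨P, hUP, hP⟩ := hU.nf_eq h1
      ⟨all P, nf_all_of_nf_eq_smul hUP, .all hP⟩

theorem STy.WF.isWFNF_nf (h1 : (1 : S) ≠ 0) {T : STy S} (h : WF T) : IsWFNF (nf T) :=
  match h with
  | .unit hU =>
      have ⟨P, hUP, hP⟩ := hU.nf_eq h1
      hUP ▸ .smul 1 hP
  | @WF.all _ T hT => by
      obtain hT0 | ⟨d, N, hTN, -⟩ := nf_eq_zero_or T
      · rw [nf_all_of_nf_eq_zero hT0]; exact .zero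
      · rw [nf_all_of_nf_eq_smul hTN]
        exact .smul d (.all (hTN ▸ hT.isWFNF_nf h1).of_smul)
  | @WF.smul _ a T hT => by
      obtain hT0 | ⟨d, N, hTN, -⟩ := nf_eq_zero_or T
      · rw [nf_smul_of_nf_eq_zero a hT0]; exact .zero
      · by_cases had : a * d = 0
        · rw [nf_smul_eq_zero hTN had]; exact .zero
        · rw [nf_smul_eq_smul hTN had]
          exact .smul _ (hTN ▸ hT.isWFNF_nf h1).of_smul
  | .zero => nf_zero (S := S) ▸ .zero

end

def EquivWF (T : STy S) : Prop := ∃ W, SEq T W ∧ WF W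

theorem equivWF_of_one_eq_zero (h1 : (1 : S) = 0) (T : STy S) : EquivWF T :=
  ⟨zero, seq_of_one_eq_zero h1 T zero, .zero⟩

theorem equivWF_iff_isWFNF_nf (h1 : (1 : S) ≠ 0) {T : STy S} : EquivWF T ↔ IsWFNF (nf T) := by
  constructor
  · rintro ⟨W, hTW, hW⟩
    exact hTW.nf_eq ▸ hW.isWFNF_nf h1
  · intro hT
    obtain ⟨W, hW, hTW⟩ := hT.exists_wf_seq
    exact ⟨W, (seq_nf T).trans hTW, hW⟩

theorem isWFNF_nf_smul_iff {c : S} {T : STy S} :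
    IsWFNF (nf (smul c T)) ↔ ∀ d N, nf T = smul d N → c * d ≠ 0 → IsUnitNF N := by
  obtain hT | ⟨d, N, hT, -⟩ := nf_eq_zero_or T
  · simp [nf_smul_of_nf_eq_zero c hT, hT, IsWFNF.zero]
  · simp only [hT, smul.injEq, and_imp]
    by_cases hcd : c * d = 0
    · simp [nf_smul_eq_zero hT hcd, hcd, IsWFNF.zero]
    · rw [nf_smul_eq_smul hT hcd]
      refine ⟨fun h => ?_, fun h => .smul _ (h d N rfl rfl hcd)⟩
      rintro _ _ rfl rfl -
      exact h.of_smul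

theorem EquivWF.of_seq {T T' : STy S} (h : EquivWF T) (hTT' : SEq T T') : EquivWF T' :=
  have ⟨W, hTW, hW⟩ := h
  ⟨W, hTT'.symm.trans hTW, hW⟩

theorem EquivWF.arrow {U T : STy S} (hU : IsUnit U) (h : EquivWF T) : EquivWF (STy.arrow U T) :=
  have ⟨W, hTW, hW⟩ := h
  ⟨.arrow U W, .arrowCong (.refl U) hTW, .unit (.arrow hU hW)⟩

theorem EquivWF.all {T : STy S} (h : EquivWF T) : EquivWF (STy.all T) :=
  have ⟨W, hTW, hW⟩ := h
  ⟨.all W, .allCong hTW, .all hW⟩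

theorem EquivWF.smul (a : S) {T : STy S} (h : EquivWF T) : EquivWF (STy.smul a T) :=
  have ⟨W, hTW, hW⟩ := h
  ⟨.smul a W, .smulCong a hTW, .smul a hW⟩

theorem EquivWF.substTV {T U : STy S} (h : EquivWF T) (hU : IsUnit U) (j : ℕ) :
    EquivWF (T.substTV U j) :=
  have ⟨W, hTW, hW⟩ := h
  ⟨W.substTV U j, hTW.substTV U j, hW.substTV hU j⟩

theorem EquivWF.smul_mul (h1 : (1 : S) ≠ 0) {a : S} {T : STy S} (h : EquivWF (STy.smul a T))
    (b : S) : EquivWF (STy.smul (a * b) T) := by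
  rw [equivWF_iff_isWFNF_nf h1, isWFNF_nf_smul_iff] at h ⊢
  refine fun d N hT habd => h d N hT fun had => habd ?_
  rw [mul_right_comm, had, zero_mul]

theorem EquivWF.add (h1 : (1 : S) ≠ 0) {a b : S} {T : STy S} (ha : EquivWF (STy.smul a T))
    (hb : EquivWF (STy.smul b T)) : EquivWF (STy.smul (a + b) T) := by
  rw [equivWF_iff_isWFNF_nf h1, isWFNF_nf_smul_iff] at ha hb ⊢
  intro d N hT habd
  by_cases had : a * d = 0
  · exact hb d N hT fun hbd => habd (by rw [add_mul, had, hbd, add_zero])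
  · exact ha d N hT had

theorem EquivWF.smul_of_smul_arrow (h1 : (1 : S) ≠ 0) {a : S} {U T : STy S}
    (h : EquivWF (STy.smul a (STy.arrow U T))) : EquivWF (STy.smul a T) := by
  rw [equivWF_iff_isWFNF_nf h1] at h
  rw [equivWF_iff_isWFNF_nf h1, isWFNF_nf_smul_iff]
  intro d N hT had
  have ha : a * 1 ≠ 0 := by rintro h; exact had (by rw [mul_one] at h; rw [h, zero_mul])
  rw [nf_smul_eq_smul (nf_arrow_of_one_ne_zero h1 U T) ha, hT] at h
  exact h.of_smul.isWFNF_of_arrow.of_smul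

theorem EquivWF.of_all (h1 : (1 : S) ≠ 0) {T : STy S} (h : EquivWF (STy.all T)) : EquivWF T := by
  rw [equivWF_iff_isWFNF_nf h1] at h ⊢
  obtain hT | ⟨d, N, hT, -⟩ := nf_eq_zero_or T
  · rw [hT]; exact .zero
  · rw [nf_all_of_nf_eq_smul hT] at h
    exact hT ▸ .smul d h.of_smul.of_all

theorem Typ.equivWF {Γ : List (STy S)} {t : Trm S} {T : STy S} (h : Typ Γ t T)
    (hΓ : ∀ U ∈ Γ, IsUnit U) : EquivWF T := by
  by_cases h1 : (1 : S) = 0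
  · exact equivWF_of_one_eq_zero h1 T
  induction h with
  | ax hget => exact ⟨_, .refl _, .unit (hΓ _ (List.mem_of_getElem? hget))⟩
  | equiv _ hTT' ih => exact (ih hΓ).of_seq hTT'
  | arrE _ _ ih _ => exact ((ih hΓ).smul_of_smul_arrow h1).smul_mul h1 _
  | arrI hU _ ih => exact (ih (List.forall_mem_cons.2 ⟨hU, hΓ⟩)).arrow hU
  | allE _ hU ih => exact ((ih hΓ).of_all h1).substTV hU 0
  | allI _ ih =>
      refine (ih ?_).all
      simp only [List.mem_map]
      rintro _ ⟨W, hW, rfl⟩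
      exact (hΓ W hW).shiftTV 1 0
  | ax0 => exact ⟨zero, .refl _, .zero⟩
  | addI _ _ ih₁ ih₂ => exact (ih₁ hΓ).add h1 (ih₂ hΓ)
  | smulI a _ ih => exact (ih hΓ).smul a

/-- `Typ`, indexed by an upper bound on the height of the derivation. -/
inductive TypH : ℕ → List (STy S) → Trm S → STy S → Prop
  | ax {n : ℕ} {Γ : List (STy S)} {k : ℕ} {U : STy S} :
      Γ[k]? = some U → TypH n Γ (Trm.var k) U
  | equiv {n : ℕ} {Γ : List (STy S)} {t : Trm S} {T T' : STy S} :
      TypH n Γ t T → SEq T T' → TypH (n + 1) Γ t T'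
  | arrE {m n : ℕ} {Γ : List (STy S)} {t r : Trm S} {U T : STy S} {a b : S} :
      TypH m Γ t (smul a (arrow U T)) → TypH n Γ r (smul b U) →
      TypH (max m n + 1) Γ (Trm.app t r) (smul (a * b) T)
  | arrI {n : ℕ} {Γ : List (STy S)} {t : Trm S} {U T : STy S} :
      IsUnit U → TypH n (U :: Γ) t T → TypH (n + 1) Γ (Trm.lam t) (arrow U T)
  | allE {n : ℕ} {Γ : List (STy S)} {t : Trm S} {T U : STy S} :
      TypH n Γ t (all T) → IsUnit U → TypH (n + 1) Γ t (T.substTV U 0)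
  | allI {n : ℕ} {Γ : List (STy S)} {t : Trm S} {T : STy S} :
      TypH n (Γ.map (shiftTV 1 0)) t T → TypH (n + 1) Γ t (all T)
  | ax0 {n : ℕ} {Γ : List (STy S)} : TypH n Γ Trm.zero zero
  | addI {m n : ℕ} {Γ : List (STy S)} {t r : Trm S} {T : STy S} {a b : S} :
      TypH m Γ t (smul a T) → TypH n Γ r (smul b T) →
      TypH (max m n + 1) Γ (Trm.add t r) (smul (a + b) T)
  | smulI {n : ℕ} {Γ : List (STy S)} {t : Trm S} {T : STy S} (a : S) :
      TypH n Γ t T → TypH (n + 1) Γ (Trm.smul a t) (smul a T)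

theorem Typ.exists_typH {Γ : List (STy S)} {t : Trm S} {T : STy S} (h : Typ Γ t T) :
    ∃ n, TypH n Γ t T := by
  induction h with
  | ax hget => exact ⟨0, .ax hget⟩
  | equiv _ hs ih => obtain ⟨n, hn⟩ := ih; exact ⟨_, .equiv hn hs⟩
  | arrE _ _ ih₁ ih₂ =>
      obtain ⟨_, h₁⟩ := ih₁; obtain ⟨_, h₂⟩ := ih₂; exact ⟨_, .arrE h₁ h₂⟩
  | arrI hU _ ih => obtain ⟨n, hn⟩ := ih; exact ⟨_, .arrI hU hn⟩
  | allE _ hU ih => obtain ⟨n, hn⟩ := ih; exact ⟨_, .allE hn hU⟩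
  | allI _ ih => obtain ⟨n, hn⟩ := ih; exact ⟨_, .allI hn⟩
  | ax0 => exact ⟨0, .ax0⟩
  | addI _ _ ih₁ ih₂ =>
      obtain ⟨_, h₁⟩ := ih₁; obtain ⟨_, h₂⟩ := ih₂; exact ⟨_, .addI h₁ h₂⟩
  | smulI a _ ih => obtain ⟨n, hn⟩ := ih; exact ⟨_, .smulI a hn⟩

theorem TypH.typ {n : ℕ} {Γ : List (STy S)} {t : Trm S} {T : STy S} (h : TypH n Γ t T) :
    Typ Γ t T := by
  induction h with
  | ax hget => exact .ax hget
  | equiv _ hs ih => exact .equiv ih hs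
  | arrE _ _ ih₁ ih₂ => exact .arrE ih₁ ih₂
  | arrI hU _ ih => exact .arrI hU ih
  | allE _ hU ih => exact .allE ih hU
  | allI _ ih => exact .allI ih
  | ax0 => exact .ax0
  | addI _ _ ih₁ ih₂ => exact .addI ih₁ ih₂
  | smulI a _ ih => exact .smulI a ih

theorem TypH.substTV {n : ℕ} {Γ : List (STy S)} {t : Trm S} {T V : STy S} (h : TypH n Γ t T)
    (hV : IsUnit V) (j : ℕ) : TypH n (Γ.map (·.substTV V j)) t (T.substTV V j) := by
  induction h generalizing j with
  | ax hget => exact .ax (by rw [List.getElem?_map, hget]; rfl)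
  | equiv _ hs ih => exact .equiv (ih j) (hs.substTV V j)
  | arrE _ _ ih₁ ih₂ => exact .arrE (ih₁ j) (ih₂ j)
  | arrI hU _ ih => exact .arrI (hU.substTV hV j) (ih j)
  | @allE _ _ _ T U _ hU ih =>
      rw [substTV_substTV T U V (Nat.zero_le j), Nat.sub_zero]
      exact .allE (ih j) (hU.substTV hV j)
  | @allI _ Γ _ _ _ ih =>
      refine .allI ?_
      have hcomm : ((·.substTV V (j + 1)) ∘ shiftTV 1 0 : STy S → STy S)
          = shiftTV 1 0 ∘ (·.substTV V j) :=
        funext fun W => substTV_shiftTV_add W V 1 (Nat.zero_le j)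
      simpa only [List.map_map, hcomm] using ih (j + 1)
  | ax0 => exact .ax0
  | addI _ _ ih₁ ih₂ => exact .addI (ih₁ j) (ih₂ j)
  | smulI a _ ih => exact .smulI a (ih j)

theorem Typ.substTV {Γ : List (STy S)} {t : Trm S} {T V : STy S} (h : Typ Γ t T)
    (hV : IsUnit V) (j : ℕ) : Typ (Γ.map (·.substTV V j)) t (T.substTV V j) :=
  have ⟨_, hn⟩ := h.exists_typH
  (hn.substTV hV j).typ

theorem exists_getElem?_of_forall₂ {α β : Type*} {R : α → β → Prop} :
    ∀ {l₁ : List α} {l₂ : List β}, List.Forall₂ R l₁ l₂ →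
      ∀ {n : ℕ} {a : α}, l₁[n]? = some a → ∃ b, l₂[n]? = some b ∧ R a b
  | _, _, .cons hab _, 0, _, rfl => ⟨_, rfl, hab⟩
  | _, _, .cons _ hl, _ + 1, _, h => exists_getElem?_of_forall₂ hl h

theorem Typ.of_forall₂_seq {Γ₁ : List (STy S)} {t : Trm S} {T : STy S} (h : Typ Γ₁ t T)
    {Γ₂ : List (STy S)} (hΓ : List.Forall₂ SEq Γ₁ Γ₂) : Typ Γ₂ t T := by
  induction h generalizing Γ₂ with
  | ax hget =>
      obtain ⟨U', hU', hUU'⟩ := exists_getElem?_of_forall₂ hΓ hget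
      exact .equiv (.ax hU') hUU'.symm
  | equiv _ hs ih => exact .equiv (ih hΓ) hs
  | arrE _ _ ih₁ ih₂ => exact .arrE (ih₁ hΓ) (ih₂ hΓ)
  | arrI hU _ ih => exact .arrI hU (ih (.cons (.refl _) hΓ))
  | allE _ hU ih => exact .allE (ih hΓ) hU
  | allI _ ih =>
      exact .allI (ih (List.forall₂_map_left_iff.2 (List.forall₂_map_right_iff.2
        (hΓ.imp fun _ _ h => h.shiftTV 1 0))))
  | ax0 => exact .ax0
  | addI _ _ ih₁ ih₂ => exact .addI (ih₁ hΓ) (ih₂ hΓ)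
  | smulI a _ ih => exact .smulI a (ih hΓ)

theorem Typ.of_seq_head {U U' : STy S} {Γ : List (STy S)} {t : Trm S} {T : STy S}
    (h : Typ (U :: Γ) t T) (hUU' : SEq U U') : Typ (U' :: Γ) t T :=
  h.of_forall₂_seq (.cons hUU' (List.forall₂_same.2 fun W _ => .refl W))

theorem PrecEq.of_seq {A B : STy S} (h : SEq A B) : PrecEq A B := by
  have generalize : Prec A (all (closeTV A 0 0)) := .inl ⟨0, .refl _⟩
  have instantiate : Prec (all (closeTV A 0 0)) B :=
    .inr ⟨closeTV A 0 0, var 0, .var 0, .refl _, by rw [substTV_closeTV]; exact h.symm⟩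
  exact .head generalize (.single instantiate)

theorem Prec.trans_seq {A B B' : STy S} (h : Prec A B) (hBB' : SEq B B') : Prec A B' := by
  rcases h with ⟨m, hB⟩ | ⟨C, U, hU, hA, hB⟩
  · exact .inl ⟨m, hBB'.symm.trans hB⟩
  · exact .inr ⟨C, U, hU, hA, hBB'.symm.trans hB⟩

theorem PrecEq.trans_seq {A B B' : STy S} (h : PrecEq A B) (hBB' : SEq B B') :
    PrecEq A B' := by
  rcases h.cases_tail with rfl | ⟨C, hAC, hCB⟩
  · exact .of_seq hBB'
  · exact hAC.tail (hCB.trans_seq hBB')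

theorem Prec.substTV_var {A B : STy S} {n : ℕ} (hn : ∀ k ∈ ftv A, k < n) (h : Prec A B) :
    Prec (A.substTV (var n) 0) (B.substTV (var n) 0) := by
  rcases h with ⟨m, hB⟩ | ⟨C, U, hU, hA, hB⟩
  · obtain ⟨m', hm'⟩ := exists_substTV_closeTV_eq A m hn
    exact .inl ⟨m', hm' ▸ hB.substTV (var n) 0⟩
  · refine .inr ⟨C.substTV (var n) 1, U.substTV (var n) 0, hU.substTV (.var n) 0,
      hA.substTV (var n) 0, ?_⟩
    simpa [substTV_substTV C U (var n) le_rfl] using hB.substTV (var n) 0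

theorem PrecEq.substTV_var {A B : STy S} (h : PrecEq A B) :
    ∃ N, ∀ n, N ≤ n → PrecEq (A.substTV (var n) 0) (B.substTV (var n) 0) := by
  induction h with
  | refl => exact ⟨0, fun _ _ => .refl⟩
  | @tail B C _ hBC ih =>
      obtain ⟨N, hN⟩ := ih
      obtain ⟨M, hM⟩ := exists_forall_mem_ftv_lt B
      exact ⟨max N M, fun n hn =>
        (hN n (le_of_max_le_left hn)).tail (hBC.substTV_var (hM n (le_of_max_le_right hn)))⟩

def HasBodyType (Γ : List (STy S)) (t : Trm S) (T : STy S) : Prop :=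
  ∃ U R, IsUnit U ∧ WF R ∧ Typ (U :: Γ) t R ∧ PrecEq (arrow U R) T

theorem HasBodyType.trans_seq {Γ : List (STy S)} {t : Trm S} {T T' : STy S}
    (h : HasBodyType Γ t T) (hTT' : SEq T T') : HasBodyType Γ t T' :=
  have ⟨U, R, hU, hR, ht, hP⟩ := h
  ⟨U, R, hU, hR, ht, hP.trans_seq hTT'⟩

theorem HasBodyType.tail {Γ : List (STy S)} {t : Trm S} {T T' : STy S}
    (h : HasBodyType Γ t T) (hTT' : Prec T T') : HasBodyType Γ t T' :=
  have ⟨U, R, hU, hR, ht, hP⟩ := h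
  ⟨U, R, hU, hR, ht, hP.tail hTT'⟩

theorem hasBodyType_arrow {Γ : List (STy S)} {t : Trm S} {U T : STy S}
    (hΓ : ∀ W ∈ Γ, IsUnit W) (hU : IsUnit U) (ht : Typ (U :: Γ) t T) :
    HasBodyType Γ t (arrow U T) :=
  have ⟨R, hTR, hR⟩ := ht.equivWF (List.forall_mem_cons.2 ⟨hU, hΓ⟩)
  ⟨U, R, hU, hR, .equiv ht hTR, .of_seq (.arrowCong (.refl U) hTR.symm)⟩

theorem HasBodyType.all_of_map_shiftTV {Γ : List (STy S)} {t : Trm S} {T : STy S}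
    (h : HasBodyType (Γ.map (shiftTV 1 0)) t T) : HasBodyType Γ t (all T) := by
  obtain ⟨U, R, hU, hR, ht, hP⟩ := h
  obtain ⟨N, hN⟩ := hP.substTV_var
  obtain ⟨M, hM⟩ := exists_forall_mem_ftv_lt T
  have ht' := ht.substTV (.var (max N M)) 0
  rw [List.map_cons, map_substTV_map_shiftTV] at ht'
  refine ⟨_, _, hU.substTV (.var _) 0, hR.substTV (.var _) 0, ht',
    (hN _ (le_max_left N M)).tail (.inl ⟨max N M, ?_⟩)⟩
  rw [closeTV_substTV T fun h => by have := hM _ (le_max_right N M) _ h; omega]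
  exact .refl _

theorem Typ.hasBodyType_of_lam {Γ : List (STy S)} {t : Trm S} {T : STy S}
    (h : Typ Γ (Trm.lam t) T) (hΓ : ∀ W ∈ Γ, IsUnit W) : HasBodyType Γ t T := by
  generalize hs : Trm.lam t = s at h
  induction h with
  | equiv _ hTT' ih => exact (ih hΓ hs).trans_seq hTT'
  | arrI hU ht => cases hs; exact hasBodyType_arrow hΓ hU ht
  | allE _ hU ih => exact (ih hΓ hs).tail (.inr ⟨_, _, hU, .refl _, .refl _⟩)
  | allI _ ih =>
      refine (ih ?_ hs).all_of_map_shiftTV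
      simp only [List.mem_map]
      rintro _ ⟨W, hW, rfl⟩
      exact (hΓ W hW).shiftTV 1 0
  | _ => cases hs

inductive InstChain : STy S → STy S → Prop
  | refl {A B : STy S} : SEq A B → InstChain A B
  | step {A C V B : STy S} : SEq A (all C) → IsUnit V → InstChain (C.substTV V 0) B →
      InstChain A B

theorem InstChain.seq_left {A' A B : STy S} (hA : SEq A' A) : InstChain A B → InstChain A' B
  | .refl h => .refl (hA.trans h)
  | .step h hV hC => .step (hA.trans h) hV hC

/-- Strong induction on the height is needed because the `∀I` case continues with the
derivation obtained by type substitution, which is not a subderivation. -/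
theorem TypH.typ_body_of_instChain (h1 : (1 : S) ≠ 0) (n : ℕ) {Γ : List (STy S)} {t : Trm S}
    {T₀ : STy S} (h : TypH n Γ (Trm.lam t) T₀) {U T : STy S}
    (hI : InstChain T₀ (arrow U T)) : Typ (U :: Γ) t T := by
  induction n using Nat.strong_induction_on generalizing Γ T₀ with
  | _ n ih =>
  cases h with
  | equiv h hs => exact ih _ (Nat.lt_succ_self _) h (hI.seq_left hs)
  | arrI _ ht =>
      cases hI with
      | refl hs =>
          obtain ⟨hUU, hTT⟩ := hs.of_arrow_arrow h1
          exact .equiv (ht.typ.of_seq_head hUU) hTT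
      | step hs _ _ => exact absurd hs (SEq.not_arrow_all h1 _ _ _)
  | allE h hV => exact ih _ (Nat.lt_succ_self _) h (.step (.refl _) hV hI)
  | allI h =>
      cases hI with
      | refl hs => exact absurd hs.symm (SEq.not_arrow_all h1 _ _ _)
      | step hs hV hC =>
          have h' := h.substTV hV 0
          rw [map_substTV_map_shiftTV] at h'
          exact ih _ (Nat.lt_succ_self _) h' (hC.seq_left (hs.of_all_all.substTV _ 0))

theorem Typ.typ_body_of_lam_arrow {Γ : List (STy S)} {t : Trm S} {U T : STy S}
    (hΓ : ∀ W ∈ Γ, IsUnit W) (h : Typ Γ (Trm.lam t) (arrow U T)) : Typ (U :: Γ) t T := by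
  by_cases h1 : (1 : S) = 0
  · obtain ⟨U', R, -, -, ht, -⟩ := h.hasBodyType_of_lam hΓ
    exact .equiv (ht.of_seq_head (seq_of_one_eq_zero h1 U' U)) (seq_of_one_eq_zero h1 R T)
  · obtain ⟨n, hn⟩ := h.exists_typH
    exact hn.typ_body_of_instChain h1 n (.refl (.refl _))

end Lineal

namespace Lineal

/-- **Generation lemma, abstractions, and its corollary.**
(1) If `Γ ⊢ λx.t : T` then there are a unit type `U` and a type `R` with
`Γ, x:U ⊢ t : R` and `U→R ⪯ T`.
(2) If `Γ ⊢ λx.t : U→T` with `U` a unit type then `Γ, x:U ⊢ t : T`. -/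
theorem generation_abs {S : Type} [CommRing S] :
    (∀ (t : Trm S) (T : STy S) (Γ : List (STy S)),
      (∀ U ∈ Γ, STy.IsUnit U) → STy.WF T → Typ Γ (Trm.lam t) T →
      ∃ (U R : STy S), STy.IsUnit U ∧ STy.WF R ∧ Typ (U :: Γ) t R ∧
        PrecEq (STy.arrow U R) T) ∧
    (∀ (t : Trm S) (U T : STy S) (Γ : List (STy S)),
      (∀ W ∈ Γ, STy.IsUnit W) → STy.IsUnit U → STy.WF T →
      Typ Γ (Trm.lam t) (STy.arrow U T) → Typ (U :: Γ) t T) :=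
  ⟨fun _ _ _ hΓ _ h => h.hasBodyType_of_lam hΓ,
    fun _ _ _ _ hΓ _ _ h => h.typ_body_of_lam_arrow hΓ⟩

end Lineal
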